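/- On skew fluctuating tableaux of length n with r rows: (1) BK_i ∘ BK_i = id for 1 ≤ i ≤ n−1; (2) toggle_j ∘ toggle_j = id for 1 ≤ j ≤ n on tableaux with 1 ≤ |c_j| ≤ r−1; (3) BK_i ∘ toggle_i = toggle_{i+1} ∘ BK_i for 1 ≤ i ≤ n−1 (on tableaux with 1 ≤ |c_i| ≤ r−1); (4) BK_i ∘ BK_j = BK_j ∘ BK_i whenever |i−j| > 1; (5) BK_i ∘ toggle_j = toggle_j ∘ BK_i for 1 ≤ i ≤ n−1 and 1 ≤ j ≤ n with j ∉ {i, i+1} (and 1 ≤ |c_j| ≤ r−1); (6) toggle_i ∘ toggle_j = toggle_j ∘ toggle_i for i ≠ j (where both toggles are defined). -/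

import Mathlib

open scoped Classical

noncomputable section

namespace FT

/-- A (raw) `r`-row integer vector; generalized partitions are the antitone ones. -/
abbrev GP (r : ℕ) := Fin r → ℤ

/-- The weakly decreasing rearrangement of a tuple. -/
def sortDesc {r : ℕ} (α : GP r) : GP r := fun i => (α ∘ Tuple.sort α) i.rev

/-- Standard basis vector (0-indexed). -/
def eV {r : ℕ} (a : Fin r) : GP r := fun i => if i = a then 1 else 0

/-- Standard basis vector with 1-indexed row `a` (zero if out of range). -/
def eN (r : ℕ) (a : ℕ) : GP r := fun i => if (i : ℕ) + 1 = a then 1 else 0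

/-- Indicator vector of a set of rows. -/
def indV {r : ℕ} (S : Finset (Fin r)) : GP r := fun i => if i ∈ S then 1 else 0

/-- `colStep r c μ λ`: `λ` is obtained from `μ` by adding (if `c ≥ 0`) or removing
(if `c ≤ 0`) a skew column of `|c|` boxes. -/
def colStep (r : ℕ) (c : ℤ) (μ lam : GP r) : Prop :=
  ∃ S : Finset (Fin r), S.card = c.natAbs ∧
    (if 0 ≤ c then lam = μ + indV S else lam = μ - indV S)

/-- Skew fluctuating tableau of length `n` and type `c` (recorded at indices `0,…,n`;
values of `T` and `c` beyond those indices are irrelevant). -/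
def IsSkewFT (r n : ℕ) (T : ℕ → GP r) (c : ℕ → ℤ) : Prop :=
  (∀ k ≤ n, Antitone (T k)) ∧ ∀ j < n, colStep r (c j) (T j) (T (j + 1))

/-- (Non-skew) fluctuating tableau: starts at the empty shape. -/
def IsFT (r n : ℕ) (T : ℕ → GP r) (c : ℕ → ℤ) : Prop :=
  IsSkewFT r n T c ∧ T 0 = 0

/-- Rectangular: the final shape is constant. -/
def Rect (r n : ℕ) (T : ℕ → GP r) : Prop := ∃ m : ℤ, ∀ i, T n i = m

/-- Bender–Knuth involution `BK_i` (for `1 ≤ i ≤ n-1`). -/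
def BK {r : ℕ} (i : ℕ) (T : ℕ → GP r) : ℕ → GP r :=
  fun k => if k = i then sortDesc (T (i + 1) + T (i - 1) - T i) else T k

/-- `BKseg a m = BK (a+m-1) ∘ ⋯ ∘ BK a` (apply `BK a` first). -/
def BKseg {r : ℕ} (a : ℕ) : ℕ → (ℕ → GP r) → ℕ → GP r
  | 0 => id
  | m + 1 => BK (a + m) ∘ BKseg a m

/-- Promotion `P = BK_{n-1} ∘ ⋯ ∘ BK_1` on length-`n` tableaux. -/
def promo {r : ℕ} (n : ℕ) (T : ℕ → GP r) : ℕ → GP r := BKseg 1 (n - 1) T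

/-- `BKsegRev a m = BK a ∘ ⋯ ∘ BK (a+m-1)` (apply `BK (a+m-1)` first). -/
def BKsegRev {r : ℕ} (a : ℕ) : ℕ → (ℕ → GP r) → ℕ → GP r
  | 0 => id
  | m + 1 => BKsegRev a m ∘ BK (a + m)

/-- Inverse of promotion: `P⁻¹ = BK_1 ∘ ⋯ ∘ BK_{n-1}`. -/
def promoInv {r : ℕ} (n : ℕ) (T : ℕ → GP r) : ℕ → GP r := BKsegRev 1 (n - 1) T

def evacAux {r : ℕ} : ℕ → (ℕ → GP r) → ℕ → GP r
  | 0, T => T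
  | m + 1, T => evacAux m (BKseg 1 (m + 1) T)

/-- Evacuation `E = BK_1 ∘ (BK_2∘BK_1) ∘ ⋯ ∘ (BK_{n-1}∘⋯∘BK_1)`. -/
def evac {r : ℕ} (n : ℕ) (T : ℕ → GP r) : ℕ → GP r := evacAux (n - 1) T

def devacAux {r : ℕ} (n : ℕ) : ℕ → (ℕ → GP r) → ℕ → GP r
  | 0, T => T
  | m + 1, T => BKseg (n - (m + 1)) (m + 1) (devacAux n m T)

/-- Dual evacuation `E* = (BK_{n-1}∘⋯∘BK_1) ∘ (BK_{n-1}∘⋯∘BK_2) ∘ ⋯ ∘ BK_{n-1}`. -/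
def devac {r : ℕ} (n : ℕ) (T : ℕ → GP r) : ℕ → GP r := devacAux n (n - 1) T

/-- `rev(-v)`. -/
def revNeg {r : ℕ} (v : GP r) : GP r := fun i => - v i.rev

/-- Time reversal `τ`. -/
def tauT {r : ℕ} (n : ℕ) (T : ℕ → GP r) : ℕ → GP r := fun k => T (n - k)

/-- `ϖ`. -/
def varpiT {r : ℕ} (T : ℕ → GP r) : ℕ → GP r := fun k => revNeg (T k)

/-- `ε`. -/
def epsT {r : ℕ} (n : ℕ) (T : ℕ → GP r) : ℕ → GP r := fun k => revNeg (T (n - k))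

/-- Sign of the `j`-th step of `T` (paper indexing: step `j` goes from `λ^{j-1}` to `λ^j`). -/
def sgnStep {r : ℕ} (T : ℕ → GP r) (j : ℕ) : ℤ :=
  if T j = T (j - 1) then 0 else if T (j - 1) ≤ T j then 1 else -1

/-- The switch involution `toggle_j` (paper indexing, `1 ≤ j ≤ n`). -/
def toggleT {r : ℕ} (j : ℕ) (T : ℕ → GP r) : ℕ → GP r :=
  fun m => if m < j then T m else fun i => T m i - sgnStep T j

/-- Number of boxes added/removed in the step from `T j` to `T (j+1)`. -/
def stepSize {r : ℕ} (T : ℕ → GP r) (j : ℕ) : ℕ :=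
  (Finset.univ.filter fun i : Fin r => T (j + 1) i ≠ T j i).card

/-- Cumulative step sizes: position of `T j` inside the oscillization. -/
def cum {r : ℕ} (T : ℕ → GP r) (j : ℕ) : ℕ := ∑ j' ∈ Finset.range j, stepSize T j'

/-- The `j`-th intermediate shape of the oscillization of the skew-column step `μ → λ`:
boxes are added smallest-row-first and removed largest-row-first. -/
def oscStep {r : ℕ} (μ lam : GP r) (j : ℕ) : GP r := fun i =>
  let S := Finset.univ.filter fun i' : Fin r => lam i' ≠ μ i'
  if i ∈ S ∧ (if μ i < lam i then (S.filter fun i' => i' ≤ i).card ≤ j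
              else (S.filter fun i' => i ≤ i').card ≤ j)
  then lam i else μ i

/-- Largest index `j ≤ n` with `cum T j ≤ k`. -/
def stdIdx {r : ℕ} (n : ℕ) (T : ℕ → GP r) (k : ℕ) : ℕ :=
  ((Finset.range (n + 1)).filter fun j => cum T j ≤ k).sup id

/-- The oscillization `std(T)` of a length-`n` tableau, a tableau of length `t = Σ|c_j|`. -/
def stdT {r : ℕ} (n : ℕ) (T : ℕ → GP r) : ℕ → GP r := fun k =>
  if stdIdx n T k = n then T n
  else oscStep (T (stdIdx n T k)) (T (stdIdx n T k + 1)) (k - cum T (stdIdx n T k))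

/-- Rows of the promotion–evacuation growth diagram: `PE t S u` is `P^u(S)`
for a length-`t` (oscillating) tableau `S`. -/
def PE {r : ℕ} (t : ℕ) (S : ℕ → GP r) (u : ℕ) : ℕ → GP r := (promo t)^[u] S

/-- `i ∈ {1,…,r-1}` is recorded at cell `(u,v)` of the growth diagram of `S`
(rows 1-indexed; `λ^{u,v} = P^u(S)(v-u)`). -/
def recorded (r t : ℕ) (S : ℕ → GP r) (i u v : ℕ) : Prop :=
  ∃ a b : Fin r,
    (PE t S (u - 1) (v - u) = PE t S u (v - u - 1) + eV a ∧
     PE t S (u - 1) (v - u + 1) = PE t S u (v - u) + eV b ∧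
     (a : ℕ) < i ∧ i ≤ (b : ℕ))
    ∨
    (PE t S u (v - u - 1) = PE t S (u - 1) (v - u) + eV a ∧
     PE t S u (v - u) = PE t S (u - 1) (v - u + 1) + eV b ∧
     (b : ℕ) < i ∧ i ≤ (a : ℕ))

/-- `i ∈ PM(T)_{u,v}` for an off-diagonal entry of the promotion matrix of `T`
(`u, v ∈ {1,…,t}`, `1 ≤ i ≤ r-1`), using the oscillization `std(T)`. -/
def PMmem (r n t : ℕ) (T : ℕ → GP r) (i u v : ℕ) : Prop :=
  1 ≤ u ∧ u ≤ t ∧ 1 ≤ v ∧ v ≤ t ∧ u ≠ v ∧ 1 ≤ i ∧ i ≤ r - 1 ∧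
    recorded r t (stdT n T) i u (if u < v then v else v + t)

/-- Graph of the partial promotion function `prom_i(T)`: `prom_i(T)(u) = v`.
By convention `prom_0 = prom_r = id` on `{1,…,t}`. -/
def promRel (r n t : ℕ) (T : ℕ → GP r) (i u v : ℕ) : Prop :=
  if i = 0 ∨ i = r then 1 ≤ u ∧ u ≤ t ∧ u = v else PMmem r n t T i u v

/-- Sum of the first `i` entries (1-indexed prefix sums). -/
def pSum {r : ℕ} (v : GP r) (i : ℕ) : ℤ :=
  ∑ j ∈ Finset.univ.filter (fun j : Fin r => (j : ℕ) < i), v j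

/-- The filled oscillized local-rule grid: row index `k` counts down from the top row
(`k = 0` is `std(λ → ν)`), column index `q` goes right; the left column is
`std(κ → λ)` read so that `grid cA κ λ ν k 0 = std(κ→λ)` at position `cA - k`. -/
def grid {r : ℕ} (cA : ℕ) (κ lam ν : GP r) : ℕ → ℕ → GP r
  | 0, q => oscStep lam ν q
  | k + 1, 0 => oscStep κ lam (cA - (k + 1))
  | k + 1, q + 1 =>
      sortDesc (grid cA κ lam ν k (q + 1) + grid cA κ lam ν (k + 1) q -
        grid cA κ lam ν k q)
  termination_by k q => (k, q)

/-- 1-indexed entry of a vector (0 if out of range). -/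
def ent {r : ℕ} (v : GP r) (h : ℕ) : ℤ := if hh : h - 1 < r then v ⟨h - 1, hh⟩ else 0

/-- The chain `j_0 = 1, j_h = ` least `h`-balance point of the lattice word of `T`
weakly after `j_{h-1}` (in `{1,…,n}`), `none` once undefined. An index `j` is an
`h`-balance point iff `(T j)_h = (T j)_{h+1}` (1-indexed rows). -/
def jChain (r n : ℕ) (T : ℕ → GP r) : ℕ → Option ℕ
  | 0 => some 1
  | h + 1 =>
    match jChain r n T h with
    | none => none
    | some jp =>
      if H : ∃ j, jp ≤ j ∧ j ≤ n ∧ ent (T j) (h + 1) = ent (T j) (h + 2) then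
        some (Nat.find H)
      else none

/-- `k`: the largest `h ≤ r-1` such that `j_1, …, j_h` are all defined. -/
def kVal (r n : ℕ) (T : ℕ → GP r) : ℕ :=
  ((Finset.range r).filter fun h => (jChain r n T h).isSome).sup id

/-- `j_h`, defaulting to `0` when undefined. -/
def jval (r n : ℕ) (T : ℕ → GP r) (h : ℕ) : ℕ := (jChain r n T h).getD 0

/-- `ω_c` for `c ∈ {0,±1,…,±r}`: top-justified column of `c` ones if `c ≥ 0`,
bottom-justified column of `|c|` minus-ones if `c < 0`. -/
def omegaGP (r : ℕ) (c : ℤ) : GP r := fun i =>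
  if 0 ≤ c then (if (i : ℕ) < c.natAbs then 1 else 0)
  else (if r - c.natAbs ≤ (i : ℕ) then -1 else 0)

/-- The extremal fluctuating tableau of type `c`: partial sums of the `ω_{c_j}`. -/
def extremal (r : ℕ) (c : ℕ → ℤ) (k : ℕ) : GP r := ∑ j ∈ Finset.range k, omegaGP r (c j)

/-- Lexicographic order: the first nonzero entry of `β - α` is positive. -/
def ltLex {r : ℕ} (α β : GP r) : Prop := ∃ i : Fin r, (∀ j, j < i → α j = β j) ∧ α i < β i

/-- Cumulative sums of `|c_j|` (block boundaries). -/
def cumC (c : ℕ → ℤ) (j : ℕ) : ℕ := ∑ j' ∈ Finset.range j, (c j').natAbs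

/-- Entry `(u,v)` (for `u,v ∈ {1,…,n}`) of the reduced promotion matrix `PMr^i(T)`:
the number of cells in the block `B_u × B_v` whose promotion-matrix entry contains `i`. -/
def PMr (r n t : ℕ) (T : ℕ → GP r) (c : ℕ → ℤ) (i u v : ℕ) : ℕ :=
  (((Finset.Icc (cumC c (u - 1) + 1) (cumC c u)) ×ˢ
    (Finset.Icc (cumC c (v - 1) + 1) (cumC c v))).filter
      fun p => PMmem r n t T i p.1 p.2).card

/-- The set of `r`-row fluctuating tableaux of length `n`, shape `lam`, type `c`,
in bundled (finitely-indexed) form. -/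
def FTset (r n : ℕ) (lam : GP r) (c : Fin n → ℤ) : Set (Fin (n + 1) → GP r) :=
  {T | (∀ k, Antitone (T k)) ∧ T 0 = 0 ∧ T (Fin.last n) = lam ∧
       ∀ j : Fin n, colStep r (c j) (T j.castSucc) (T j.succ)}



open Finset

section Aux

variable {r : ℕ}

/-- Number of entries of `x` that are at least `m`. -/
def cnt (x : GP r) (m : ℤ) : ℕ := (Finset.univ.filter fun i => m ≤ x i).card

lemma cnt_comp_equiv (x : GP r) (e : Fin r ≃ Fin r) (m : ℤ) :
    cnt (fun i => x (e i)) m = cnt x m := by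
  unfold cnt
  apply Finset.card_bij' (fun a _ => e a) (fun a _ => e.symm a) <;> simp

lemma sortDesc_eq_comp (x : GP r) :
    sortDesc x = fun i => x ((Fin.revPerm.trans (Tuple.sort x)) i) := by
  funext i
  simp [sortDesc, Equiv.trans_apply]

lemma cnt_sortDesc (x : GP r) (m : ℤ) : cnt (sortDesc x) m = cnt x m := by
  rw [sortDesc_eq_comp]
  exact cnt_comp_equiv x _ m

lemma antitone_sortDesc (x : GP r) : Antitone (sortDesc x) := by
  intro a b hab
  exact Tuple.monotone_sort x (Fin.rev_le_rev.mpr hab)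

lemma sum_sortDesc (x : GP r) : ∑ i, sortDesc x i = ∑ i, x i := by
  rw [sortDesc_eq_comp]
  exact Equiv.sum_comp _ x

lemma lt_cnt_iff {w : GP r} (hw : Antitone w) {m : ℤ} {i : Fin r} :
    m ≤ w i ↔ (i : ℕ) < cnt w m := by
  constructor
  · intro h
    have hsub : Finset.Iic i ⊆ Finset.univ.filter fun j => m ≤ w j := by
      intro j hj
      simp only [Finset.mem_Iic] at hj
      simp only [Finset.mem_filter, Finset.mem_univ, true_and]
      exact le_trans h (hw hj)
    calc (i : ℕ) < (i : ℕ) + 1 := Nat.lt_succ_self _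
      _ = (Finset.Iic i).card := (Fin.card_Iic i).symm
      _ ≤ cnt w m := Finset.card_le_card hsub
  · intro h
    by_contra hc
    push_neg at hc
    have hsub : (Finset.univ.filter fun j => m ≤ w j) ⊆ Finset.Iio i := by
      intro j hj
      simp only [Finset.mem_filter, Finset.mem_univ, true_and] at hj
      simp only [Finset.mem_Iio]
      by_contra hji
      push_neg at hji
      exact absurd (lt_of_le_of_lt hj (lt_of_le_of_lt (hw hji) hc)) (lt_irrefl _)
    have h2 : cnt w m ≤ (i : ℕ) := by
      unfold cnt
      have := Finset.card_le_card hsub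
      rwa [Fin.card_Iio] at this
    omega

lemma eq_of_antitone_cnt {w w' : GP r} (hw : Antitone w) (hw' : Antitone w')
    (h : ∀ m, cnt w m = cnt w' m) : w = w' := by
  funext i
  have h1 : w i ≤ w' i := by
    have := (lt_cnt_iff hw).1 (le_refl (w i))
    rw [h] at this
    exact (lt_cnt_iff hw').2 this
  have h2 : w' i ≤ w i := by
    have := (lt_cnt_iff hw').1 (le_refl (w' i))
    rw [← h] at this
    exact (lt_cnt_iff hw).2 this
  omega

lemma cnt_mono {x y : GP r} (h : ∀ i, x i ≤ y i) (m : ℤ) : cnt x m ≤ cnt y m := by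
  apply Finset.card_le_card
  intro j hj
  simp only [Finset.mem_filter, Finset.mem_univ, true_and] at hj ⊢
  have := h j
  omega

lemma indV_01 (S : Finset (Fin r)) (i : Fin r) : indV S i = 0 ∨ indV S i = 1 := by
  unfold indV; split <;> simp

lemma cnt_add_indV (μ : GP r) (S : Finset (Fin r)) (v : ℤ) :
    cnt (μ + indV S) (v + 1) =
      cnt μ (v + 1) + (Finset.univ.filter fun i => μ i = v ∧ i ∈ S).card := by
  unfold cnt
  rw [← Finset.card_union_of_disjoint (by
    rw [Finset.disjoint_left]
    intro a ha hb
    simp only [Finset.mem_filter, Finset.mem_univ, true_and] at ha hb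
    omega)]
  congr 1
  rw [← Finset.filter_or]
  apply Finset.filter_congr
  intro i _
  by_cases hi : i ∈ S <;> simp [indV, hi] <;> omega

lemma cnt_sub_indV (μ : GP r) (S : Finset (Fin r)) (v : ℤ) :
    cnt (μ - indV S) v =
      cnt μ (v + 1) + (Finset.univ.filter fun i => μ i = v ∧ i ∉ S).card := by
  unfold cnt
  rw [← Finset.card_union_of_disjoint (by
    rw [Finset.disjoint_left]
    intro a ha hb
    simp only [Finset.mem_filter, Finset.mem_univ, true_and] at ha hb
    omega)]
  congr 1
  rw [← Finset.filter_or]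
  apply Finset.filter_congr
  intro i _
  by_cases hi : i ∈ S <;> simp [indV, hi] <;> omega

lemma level_split (μ : GP r) (S : Finset (Fin r)) (v : ℤ) :
    (Finset.univ.filter fun i => μ i = v ∧ i ∈ S).card +
      (Finset.univ.filter fun i => μ i = v ∧ i ∉ S).card =
      (Finset.univ.filter fun i => μ i = v).card := by
  rw [← Finset.card_union_of_disjoint (by
    rw [Finset.disjoint_left]
    intro a ha hb
    simp only [Finset.mem_filter, Finset.mem_univ, true_and] at ha hb
    exact hb.2 ha.2)]
  congr 1
  rw [← Finset.filter_or]
  apply Finset.filter_congr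
  intro i _
  by_cases hi : i ∈ S <;> simp [hi]

lemma sum_indV (A : Finset (Fin r)) (S : Finset (Fin r)) :
    ∑ i ∈ A, indV S i = ((A.filter fun i => i ∈ S).card : ℤ) := by
  unfold indV
  rw [Finset.sum_boole]

lemma sum_indV_univ (S : Finset (Fin r)) : ∑ i, indV S i = (S.card : ℤ) := by
  rw [sum_indV]
  congr 2
  ext i
  simp

lemma filter_and_eq (μ : GP r) (S : Finset (Fin r)) (v : ℤ) :
    (Finset.univ.filter fun i => μ i = v).filter (fun i => i ∈ S) =
      Finset.univ.filter fun i => μ i = v ∧ i ∈ S := by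
  rw [Finset.filter_filter]

lemma count_eq_iff_sum_eq (μ : GP r) (S S' : Finset (Fin r)) (v : ℤ) :
    ((Finset.univ.filter fun i => μ i = v ∧ i ∈ S').card =
      (Finset.univ.filter fun i => μ i = v ∧ i ∈ S).card) ↔
    (∑ i ∈ Finset.univ.filter (fun i => μ i = v), indV S' i =
      ∑ i ∈ Finset.univ.filter (fun i => μ i = v), indV S i) := by
  rw [sum_indV, sum_indV, filter_and_eq, filter_and_eq]
  exact Nat.cast_inj.symm

/-- Sorting `μ + indV S` for antitone `μ` gives `μ + indV S'` with the same number of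
marked boxes in each level set of `μ`. -/
lemma sort_add_indV {μ : GP r} (hμ : Antitone μ) (S : Finset (Fin r)) :
    ∃ S' : Finset (Fin r), S'.card = S.card ∧ sortDesc (μ + indV S) = μ + indV S' ∧
      ∀ v : ℤ, (Finset.univ.filter fun i => μ i = v ∧ i ∈ S').card =
               (Finset.univ.filter fun i => μ i = v ∧ i ∈ S).card := by
  set w := sortDesc (μ + indV S) with hw
  have hwa : Antitone w := antitone_sortDesc _
  have hcnt : ∀ m, cnt w m = cnt (μ + indV S) m := fun m => cnt_sortDesc _ m
  have step : ∀ i, w i = μ i ∨ w i = μ i + 1 := by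
    intro i
    have h1 : μ i ≤ w i := by
      apply (lt_cnt_iff hwa).2
      rw [hcnt]
      refine lt_of_lt_of_le ((lt_cnt_iff hμ).1 le_rfl) (cnt_mono (fun j => ?_) _)
      have := indV_01 S j
      simp only [Pi.add_apply]
      omega
    have h2 : ¬ (μ i + 2 ≤ w i) := by
      intro hcon
      have hlt := (lt_cnt_iff hwa).1 hcon
      rw [hcnt] at hlt
      have hle : cnt (μ + indV S) (μ i + 2) ≤ cnt μ (μ i + 1) := by
        apply Finset.card_le_card
        intro j hj
        simp only [Finset.mem_filter, Finset.mem_univ, true_and, Pi.add_apply] at hj ⊢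
        have := indV_01 S j
        omega
      have := (lt_cnt_iff hμ).2 (lt_of_lt_of_le hlt hle)
      omega
    omega
  refine ⟨Finset.univ.filter (fun i => w i = μ i + 1), ?_, ?_, ?_⟩
  case refine_2 =>
    funext i
    simp only [Pi.add_apply, indV, Finset.mem_filter, Finset.mem_univ, true_and]
    rcases step i with h | h
    · rw [if_neg (by omega)]; omega
    · rw [if_pos h]; omega
  case refine_1 =>
    have heq : w = μ + indV (Finset.univ.filter (fun i => w i = μ i + 1)) := by
      funext i
      simp only [Pi.add_apply, indV, Finset.mem_filter, Finset.mem_univ, true_and]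
      rcases step i with h | h
      · rw [if_neg (by omega)]; omega
      · rw [if_pos h]; omega
    have hsum := sum_sortDesc (μ + indV S)
    rw [← hw, heq] at hsum
    simp only [Pi.add_apply, Finset.sum_add_distrib] at hsum
    rw [sum_indV_univ, sum_indV_univ] at hsum
    omega
  case refine_3 =>
    intro v
    have heq : μ + indV (Finset.univ.filter (fun i => w i = μ i + 1)) = w := by
      funext i
      simp only [Pi.add_apply, indV, Finset.mem_filter, Finset.mem_univ, true_and]
      rcases step i with h | h
      · rw [if_neg (by omega)]; omega
      · rw [if_pos h]; omega
    have e1 := cnt_add_indV μ (Finset.univ.filter (fun i => w i = μ i + 1)) v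
    have e2 := cnt_add_indV μ S v
    rw [heq, hcnt] at e1
    omega

/-- Sorting `μ - indV S` for antitone `μ` gives `μ - indV S'` with the same number of
marked boxes in each level set of `μ`. -/
lemma sort_sub_indV {μ : GP r} (hμ : Antitone μ) (S : Finset (Fin r)) :
    ∃ S' : Finset (Fin r), S'.card = S.card ∧ sortDesc (μ - indV S) = μ - indV S' ∧
      ∀ v : ℤ, (Finset.univ.filter fun i => μ i = v ∧ i ∈ S').card =
               (Finset.univ.filter fun i => μ i = v ∧ i ∈ S).card := by
  set w := sortDesc (μ - indV S) with hw
  have hwa : Antitone w := antitone_sortDesc _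
  have hcnt : ∀ m, cnt w m = cnt (μ - indV S) m := fun m => cnt_sortDesc _ m
  have step : ∀ i, w i = μ i ∨ w i = μ i - 1 := by
    intro i
    have h1 : μ i - 1 ≤ w i := by
      apply (lt_cnt_iff hwa).2
      rw [hcnt]
      refine lt_of_lt_of_le ((lt_cnt_iff hμ).1 le_rfl) (Finset.card_le_card (fun j hj => ?_))
      simp only [Finset.mem_filter, Finset.mem_univ, true_and, Pi.sub_apply] at hj ⊢
      have := indV_01 S j
      omega
    have h2 : ¬ (μ i + 1 ≤ w i) := by
      intro hcon
      have hlt := (lt_cnt_iff hwa).1 hcon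
      rw [hcnt] at hlt
      have hle : cnt (μ - indV S) (μ i + 1) ≤ cnt μ (μ i + 1) := by
        apply cnt_mono
        intro j
        have := indV_01 S j
        simp only [Pi.sub_apply]
        omega
      have := (lt_cnt_iff hμ).2 (lt_of_lt_of_le hlt hle)
      omega
    omega
  refine ⟨Finset.univ.filter (fun i => w i = μ i - 1), ?_, ?_, ?_⟩
  case refine_2 =>
    funext i
    simp only [Pi.sub_apply, indV, Finset.mem_filter, Finset.mem_univ, true_and]
    rcases step i with h | h
    · rw [if_neg (by omega)]; omega
    · rw [if_pos h]; omega
  case refine_1 =>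
    have heq : w = μ - indV (Finset.univ.filter (fun i => w i = μ i - 1)) := by
      funext i
      simp only [Pi.sub_apply, indV, Finset.mem_filter, Finset.mem_univ, true_and]
      rcases step i with h | h
      · rw [if_neg (by omega)]; omega
      · rw [if_pos h]; omega
    have hsum := sum_sortDesc (μ - indV S)
    rw [← hw, heq] at hsum
    simp only [Pi.sub_apply, Finset.sum_sub_distrib] at hsum
    rw [sum_indV_univ, sum_indV_univ] at hsum
    omega
  case refine_3 =>
    intro v
    have heq : μ - indV (Finset.univ.filter (fun i => w i = μ i - 1)) = w := by
      funext i
      simp only [Pi.sub_apply, indV, Finset.mem_filter, Finset.mem_univ, true_and]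
      rcases step i with h | h
      · rw [if_neg (by omega)]; omega
      · rw [if_pos h]; omega
    have e1 := cnt_sub_indV μ (Finset.univ.filter (fun i => w i = μ i - 1)) v
    have e2 := cnt_sub_indV μ S v
    rw [heq, hcnt] at e1
    have hsp1 := level_split μ (Finset.univ.filter (fun i => w i = μ i - 1)) v
    have hsp2 := level_split μ S v
    omega

lemma cnt_add_eq_of_level {μ : GP r} {S S' : Finset (Fin r)}
    (h : ∀ v : ℤ, (Finset.univ.filter fun i => μ i = v ∧ i ∈ S').card =
                  (Finset.univ.filter fun i => μ i = v ∧ i ∈ S).card)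
    (m : ℤ) : cnt (μ + indV S') m = cnt (μ + indV S) m := by
  have d1 := cnt_add_indV μ S' (m - 1)
  have d2 := cnt_add_indV μ S (m - 1)
  have hm : m - 1 + 1 = m := by ring
  rw [hm] at d1 d2
  rw [d1, d2, h]

lemma cnt_sub_eq_of_level {μ : GP r} {S S' : Finset (Fin r)}
    (h : ∀ v : ℤ, (Finset.univ.filter fun i => μ i = v ∧ i ∈ S').card =
                  (Finset.univ.filter fun i => μ i = v ∧ i ∈ S).card)
    (m : ℤ) : cnt (μ - indV S') m = cnt (μ - indV S) m := by
  have d1 := cnt_sub_indV μ S' m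
  have d2 := cnt_sub_indV μ S m
  have hsp1 := level_split μ S' m
  have hsp2 := level_split μ S m
  have := h m
  omega

end Aux


section Core

variable {r : ℕ}

/-- The Bender–Knuth local rule: if `μ →^{c1} lam →^{c2} ν` (all antitone), then
`λ' := sortDesc (ν + μ - lam)` satisfies `λ' →^{c1} ν` and the rule is an involution. -/
lemma BKcore {μ lam ν : GP r} {c1 c2 : ℤ}
    (hμ : Antitone μ) (hlam : Antitone lam) (hν : Antitone ν)
    (h1 : colStep r c1 μ lam) (h2 : colStep r c2 lam ν) :
    colStep r c1 (sortDesc (ν + μ - lam)) ν ∧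
      sortDesc (ν + μ - sortDesc (ν + μ - lam)) = lam := by
  obtain ⟨S1, hS1c, h1'⟩ := h1
  obtain ⟨S2, hS2c, h2'⟩ := h2
  by_cases e1 : 0 ≤ c1 <;> by_cases e2 : 0 ≤ c2
  · -- add, add
    rw [if_pos e1] at h1'; rw [if_pos e2] at h2'
    have hx1 : ν + μ - lam = μ + indV S2 := by rw [h2']; abel
    have hx2 : ν + μ - lam = ν - indV S1 := by rw [h1']; abel
    obtain ⟨S2', hc2', heq2, hlev2⟩ := sort_add_indV hμ S2
    obtain ⟨S1', hc1', heq1, -⟩ := sort_sub_indV hν S1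
    have hL2 : sortDesc (ν + μ - lam) = μ + indV S2' := by rw [hx1, heq2]
    have hL1 : sortDesc (ν + μ - lam) = ν - indV S1' := by rw [hx2, heq1]
    have key : ∀ v : ℤ, (Finset.univ.filter fun i => μ i = v ∧ i ∈ S1').card =
        (Finset.univ.filter fun i => μ i = v ∧ i ∈ S1).card := by
      intro v
      rw [count_eq_iff_sum_eq]
      have hsum2 := (count_eq_iff_sum_eq μ S2 S2' v).1 (hlev2 v)
      have hpt : ∀ i ∈ Finset.univ.filter (fun i => μ i = v),
          indV S1' i = indV S1 i + indV S2 i - indV S2' i := by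
        intro i _
        have a1 := congrFun hL1 i
        have a2 := congrFun hL2 i
        have a3 := congrFun h1' i
        have a4 := congrFun h2' i
        simp only [Pi.add_apply, Pi.sub_apply] at a1 a2 a3 a4
        omega
      rw [Finset.sum_congr rfl hpt, Finset.sum_sub_distrib, Finset.sum_add_distrib]
      omega
    refine ⟨⟨S1', by rw [hc1', hS1c], by rw [if_pos e1, hL1]; abel⟩, ?_⟩
    have hxx : ν + μ - sortDesc (ν + μ - lam) = μ + indV S1' := by
      rw [hL1]; abel
    rw [hxx]
    apply eq_of_antitone_cnt (antitone_sortDesc _) hlam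
    intro m
    rw [cnt_sortDesc, h1']
    exact cnt_add_eq_of_level key m
  · -- add, sub
    rw [if_pos e1] at h1'; rw [if_neg e2] at h2'
    have hx1 : ν + μ - lam = μ - indV S2 := by rw [h2']; abel
    have hx2 : ν + μ - lam = ν - indV S1 := by rw [h1']; abel
    obtain ⟨S2', hc2', heq2, hlev2⟩ := sort_sub_indV hμ S2
    obtain ⟨S1', hc1', heq1, -⟩ := sort_sub_indV hν S1
    have hL2 : sortDesc (ν + μ - lam) = μ - indV S2' := by rw [hx1, heq2]
    have hL1 : sortDesc (ν + μ - lam) = ν - indV S1' := by rw [hx2, heq1]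
    have key : ∀ v : ℤ, (Finset.univ.filter fun i => μ i = v ∧ i ∈ S1').card =
        (Finset.univ.filter fun i => μ i = v ∧ i ∈ S1).card := by
      intro v
      rw [count_eq_iff_sum_eq]
      have hsum2 := (count_eq_iff_sum_eq μ S2 S2' v).1 (hlev2 v)
      have hpt : ∀ i ∈ Finset.univ.filter (fun i => μ i = v),
          indV S1' i = indV S1 i - indV S2 i + indV S2' i := by
        intro i _
        have a1 := congrFun hL1 i
        have a2 := congrFun hL2 i
        have a3 := congrFun h1' i
        have a4 := congrFun h2' i
        simp only [Pi.add_apply, Pi.sub_apply] at a1 a2 a3 a4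
        omega
      rw [Finset.sum_congr rfl hpt, Finset.sum_add_distrib, Finset.sum_sub_distrib]
      omega
    refine ⟨⟨S1', by rw [hc1', hS1c], by rw [if_pos e1, hL1]; abel⟩, ?_⟩
    have hxx : ν + μ - sortDesc (ν + μ - lam) = μ + indV S1' := by
      rw [hL1]; abel
    rw [hxx]
    apply eq_of_antitone_cnt (antitone_sortDesc _) hlam
    intro m
    rw [cnt_sortDesc, h1']
    exact cnt_add_eq_of_level key m
  · -- sub, add
    rw [if_neg e1] at h1'; rw [if_pos e2] at h2'
    have hx1 : ν + μ - lam = μ + indV S2 := by rw [h2']; abel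
    have hx2 : ν + μ - lam = ν + indV S1 := by rw [h1']; abel
    obtain ⟨S2', hc2', heq2, hlev2⟩ := sort_add_indV hμ S2
    obtain ⟨S1', hc1', heq1, -⟩ := sort_add_indV hν S1
    have hL2 : sortDesc (ν + μ - lam) = μ + indV S2' := by rw [hx1, heq2]
    have hL1 : sortDesc (ν + μ - lam) = ν + indV S1' := by rw [hx2, heq1]
    have key : ∀ v : ℤ, (Finset.univ.filter fun i => μ i = v ∧ i ∈ S1').card =
        (Finset.univ.filter fun i => μ i = v ∧ i ∈ S1).card := by
      intro v
      rw [count_eq_iff_sum_eq]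
      have hsum2 := (count_eq_iff_sum_eq μ S2 S2' v).1 (hlev2 v)
      have hpt : ∀ i ∈ Finset.univ.filter (fun i => μ i = v),
          indV S1' i = indV S1 i - indV S2 i + indV S2' i := by
        intro i _
        have a1 := congrFun hL1 i
        have a2 := congrFun hL2 i
        have a3 := congrFun h1' i
        have a4 := congrFun h2' i
        simp only [Pi.add_apply, Pi.sub_apply] at a1 a2 a3 a4
        omega
      rw [Finset.sum_congr rfl hpt, Finset.sum_add_distrib, Finset.sum_sub_distrib]
      omega
    refine ⟨⟨S1', by rw [hc1', hS1c], by rw [if_neg e1, hL1]; abel⟩, ?_⟩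
    have hxx : ν + μ - sortDesc (ν + μ - lam) = μ - indV S1' := by
      rw [hL1]; abel
    rw [hxx]
    apply eq_of_antitone_cnt (antitone_sortDesc _) hlam
    intro m
    rw [cnt_sortDesc, h1']
    exact cnt_sub_eq_of_level key m
  · -- sub, sub
    rw [if_neg e1] at h1'; rw [if_neg e2] at h2'
    have hx1 : ν + μ - lam = μ - indV S2 := by rw [h2']; abel
    have hx2 : ν + μ - lam = ν + indV S1 := by rw [h1']; abel
    obtain ⟨S2', hc2', heq2, hlev2⟩ := sort_sub_indV hμ S2
    obtain ⟨S1', hc1', heq1, -⟩ := sort_add_indV hν S1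
    have hL2 : sortDesc (ν + μ - lam) = μ - indV S2' := by rw [hx1, heq2]
    have hL1 : sortDesc (ν + μ - lam) = ν + indV S1' := by rw [hx2, heq1]
    have key : ∀ v : ℤ, (Finset.univ.filter fun i => μ i = v ∧ i ∈ S1').card =
        (Finset.univ.filter fun i => μ i = v ∧ i ∈ S1).card := by
      intro v
      rw [count_eq_iff_sum_eq]
      have hsum2 := (count_eq_iff_sum_eq μ S2 S2' v).1 (hlev2 v)
      have hpt : ∀ i ∈ Finset.univ.filter (fun i => μ i = v),
          indV S1' i = indV S1 i + indV S2 i - indV S2' i := by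
        intro i _
        have a1 := congrFun hL1 i
        have a2 := congrFun hL2 i
        have a3 := congrFun h1' i
        have a4 := congrFun h2' i
        simp only [Pi.add_apply, Pi.sub_apply] at a1 a2 a3 a4
        omega
      rw [Finset.sum_congr rfl hpt, Finset.sum_sub_distrib, Finset.sum_add_distrib]
      omega
    refine ⟨⟨S1', by rw [hc1', hS1c], by rw [if_neg e1, hL1]; abel⟩, ?_⟩
    have hxx : ν + μ - sortDesc (ν + μ - lam) = μ - indV S1' := by
      rw [hL1]; abel
    rw [hxx]
    apply eq_of_antitone_cnt (antitone_sortDesc _) hlam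
    intro m
    rw [cnt_sortDesc, h1']
    exact cnt_sub_eq_of_level key m

lemma BK_apply_ne {T : ℕ → GP r} {i k : ℕ} (h : ¬ k = i) : BK i T k = T k := by
  unfold BK
  rw [if_neg h]

lemma BK_apply_eq (T : ℕ → GP r) (i : ℕ) :
    BK i T i = sortDesc (T (i + 1) + T (i - 1) - T i) := by
  unfold BK
  rw [if_pos rfl]

lemma toggleT_lt {T : ℕ → GP r} {j m : ℕ} (h : m < j) : toggleT j T m = T m := by
  simp [toggleT, h]

lemma toggleT_ge {T : ℕ → GP r} {j m : ℕ} (h : ¬ m < j) :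
    toggleT j T m = fun x => T m x - sgnStep T j := by
  simp [toggleT, h]

lemma sgnStep_add {T : ℕ → GP r} {j : ℕ} {S : Finset (Fin r)} (hS : S.Nonempty)
    (h : T j = T (j - 1) + indV S) : sgnStep T j = 1 := by
  obtain ⟨a, ha⟩ := hS
  have hv : T j a = T (j - 1) a + 1 := by
    rw [h]; simp [indV, ha]
  have hne : ¬ T j = T (j - 1) := fun hc => by rw [hc] at hv; omega
  have hle : T (j - 1) ≤ T j := by
    rw [h]
    refine Pi.le_def.mpr fun i => ?_
    simp only [Pi.add_apply]
    have := indV_01 S i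
    omega
  unfold sgnStep
  rw [if_neg hne, if_pos hle]

lemma sgnStep_sub {T : ℕ → GP r} {j : ℕ} {S : Finset (Fin r)} (hS : S.Nonempty)
    (h : T j = T (j - 1) - indV S) : sgnStep T j = -1 := by
  obtain ⟨a, ha⟩ := hS
  have hv : T j a = T (j - 1) a - 1 := by
    rw [h]; simp [indV, ha]
  have hne : ¬ T j = T (j - 1) := fun hc => by rw [hc] at hv; omega
  have hnle : ¬ T (j - 1) ≤ T j := fun hc => by
    have := Pi.le_def.mp hc a
    omega
  unfold sgnStep
  rw [if_neg hne, if_neg hnle]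

lemma sgnStep_eq_of {U T : ℕ → GP r} {j : ℕ} (hj : U j = T j) (hj1 : U (j - 1) = T (j - 1)) :
    sgnStep U j = sgnStep T j := by
  unfold sgnStep
  rw [hj, hj1]

lemma sgnStep_congr {U T : ℕ → GP r} {j : ℕ} {d : ℤ}
    (hj : ∀ x, U j x = T j x - d) (hj1 : ∀ x, U (j - 1) x = T (j - 1) x - d) :
    sgnStep U j = sgnStep T j := by
  unfold sgnStep
  have h1 : (U j = U (j - 1)) ↔ (T j = T (j - 1)) := by
    constructor
    · intro h; funext x
      have := congrFun h x
      rw [hj x, hj1 x] at this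
      omega
    · intro h; funext x
      rw [hj x, hj1 x, congrFun h x]
  have h2 : (U (j - 1) ≤ U j) ↔ (T (j - 1) ≤ T j) := by
    constructor
    · intro h
      refine Pi.le_def.mpr fun x => ?_
      have := Pi.le_def.mp h x
      rw [hj x, hj1 x] at this
      omega
    · intro h
      refine Pi.le_def.mpr fun x => ?_
      have := Pi.le_def.mp h x
      rw [hj x, hj1 x]
      omega
  rw [if_congr h1 rfl (if_congr h2 rfl rfl)]

lemma cnt_add_const (y : GP r) (d m : ℤ) : cnt (fun x => y x + d) m = cnt y (m - d) := by
  unfold cnt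
  congr 1
  apply Finset.filter_congr
  intro i _
  show m ≤ y i + d ↔ m - d ≤ y i
  omega

lemma sortDesc_shift (v : GP r) (d : ℤ) :
    sortDesc (fun x => v x + d) = fun x => sortDesc v x + d := by
  apply eq_of_antitone_cnt (antitone_sortDesc _)
  · intro a b hab
    simp only
    exact add_le_add_left (antitone_sortDesc v hab) d
  · intro m
    rw [cnt_sortDesc, cnt_add_const, cnt_add_const, cnt_sortDesc]

lemma toggle_comm_aux (T : ℕ → GP r) {i j : ℕ} (hij : i < j) :
    toggleT i (toggleT j T) = toggleT j (toggleT i T) := by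
  have hsA : sgnStep (toggleT j T) i = sgnStep T i :=
    sgnStep_eq_of (toggleT_lt hij) (toggleT_lt (by omega))
  have hsB : sgnStep (toggleT i T) j = sgnStep T j := by
    apply sgnStep_congr (d := sgnStep T i)
    · intro x; rw [toggleT_ge (show ¬ j < i by omega)]
    · intro x; rw [toggleT_ge (show ¬ j - 1 < i by omega)]
  funext m
  by_cases h1 : m < i
  · rw [toggleT_lt h1, toggleT_lt (show m < j by omega), toggleT_lt (show m < j by omega),
      toggleT_lt h1]
  · by_cases h2 : m < j
    · rw [toggleT_ge h1, hsA, toggleT_lt h2, toggleT_lt h2, toggleT_ge h1]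
    · rw [toggleT_ge h1, hsA, toggleT_ge h2, toggleT_ge h2, hsB, toggleT_ge h1]
      funext x
      show T m x - sgnStep T j - sgnStep T i = T m x - sgnStep T i - sgnStep T j
      ring

end Core

/-- **Lemma (Bender–Knuth and switch relations).** On length-`n` skew fluctuating
tableaux with `r` rows (paper indexing: `BK_i` for `1 ≤ i ≤ n-1`, `toggle_j` for
`1 ≤ j ≤ n` with `1 ≤ |c_j| ≤ r-1`; here `c_j` is `c (j-1)`):
(1) `BK_i ∘ BK_i = id`; (2) `toggle_j ∘ toggle_j = id`;
(3) `BK_i ∘ toggle_i = toggle_{i+1} ∘ BK_i`;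
(4) `BK_i ∘ BK_j = BK_j ∘ BK_i` when `|i-j| > 1`;
(5) `BK_i ∘ toggle_j = toggle_j ∘ BK_i` when `j ∉ {i, i+1}`;
(6) `toggle_i ∘ toggle_j = toggle_j ∘ toggle_i` when `i ≠ j`. -/
theorem BK_toggle_relations (r n : ℕ) :
    (∀ (T : ℕ → GP r) (c : ℕ → ℤ), IsSkewFT r n T c →
      ∀ i, 1 ≤ i → i ≤ n - 1 → BK i (BK i T) = T) ∧
    (∀ (T : ℕ → GP r) (c : ℕ → ℤ), IsSkewFT r n T c →
      ∀ j, 1 ≤ j → j ≤ n → 1 ≤ (c (j - 1)).natAbs → (c (j - 1)).natAbs ≤ r - 1 →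
        toggleT j (toggleT j T) = T) ∧
    (∀ (T : ℕ → GP r) (c : ℕ → ℤ), IsSkewFT r n T c →
      ∀ i, 1 ≤ i → i ≤ n - 1 → 1 ≤ (c (i - 1)).natAbs → (c (i - 1)).natAbs ≤ r - 1 →
        BK i (toggleT i T) = toggleT (i + 1) (BK i T)) ∧
    (∀ (T : ℕ → GP r) (c : ℕ → ℤ), IsSkewFT r n T c →
      ∀ i j, 1 ≤ i → i ≤ n - 1 → 1 ≤ j → j ≤ n - 1 → (i + 1 < j ∨ j + 1 < i) →
        BK i (BK j T) = BK j (BK i T)) ∧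
    (∀ (T : ℕ → GP r) (c : ℕ → ℤ), IsSkewFT r n T c →
      ∀ i j, 1 ≤ i → i ≤ n - 1 → 1 ≤ j → j ≤ n → j ≠ i → j ≠ i + 1 →
        1 ≤ (c (j - 1)).natAbs → (c (j - 1)).natAbs ≤ r - 1 →
        BK i (toggleT j T) = toggleT j (BK i T)) ∧
    (∀ (T : ℕ → GP r) (c : ℕ → ℤ), IsSkewFT r n T c →
      ∀ i j, 1 ≤ i → i ≤ n → 1 ≤ j → j ≤ n → i ≠ j →
        1 ≤ (c (i - 1)).natAbs → (c (i - 1)).natAbs ≤ r - 1 →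
        1 ≤ (c (j - 1)).natAbs → (c (j - 1)).natAbs ≤ r - 1 →
        toggleT i (toggleT j T) = toggleT j (toggleT i T)) := by
  constructor
  · -- (1) BK_i ∘ BK_i = id
    rintro T c ⟨hA, hC⟩ i hi1 hi2
    have h1 : colStep r (c (i - 1)) (T (i - 1)) (T i) := by
      have := hC (i - 1) (by omega)
      rwa [show i - 1 + 1 = i by omega] at this
    have h2 := hC i (by omega)
    have M := BKcore (hA (i - 1) (by omega)) (hA i (by omega)) (hA (i + 1) (by omega)) h1 h2
    funext k
    by_cases hk : k = i
    · rw [hk]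
      have e1 : BK i T (i + 1) = T (i + 1) := BK_apply_ne (by omega)
      have e0 : BK i T (i - 1) = T (i - 1) := BK_apply_ne (by omega)
      rw [BK_apply_eq, e1, e0, BK_apply_eq]
      exact M.2
    · rw [BK_apply_ne hk, BK_apply_ne hk]
  constructor
  · -- (2) toggle_j ∘ toggle_j = id
    rintro T c ⟨hA, hC⟩ j hj1 hj2 hc1 hc2
    have hstep : colStep r (c (j - 1)) (T (j - 1)) (T j) := by
      have := hC (j - 1) (by omega)
      rwa [show j - 1 + 1 = j by omega] at this
    obtain ⟨S, hScard, hS⟩ := hstep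
    have hSne : S.Nonempty := Finset.card_pos.mp (by omega)
    have hcc : Sᶜ.card = r - S.card := by
      rw [Finset.card_compl, Fintype.card_fin]
    have hcne : Sᶜ.Nonempty := Finset.card_pos.mp (by omega)
    by_cases e : 0 ≤ c (j - 1)
    · rw [if_pos e] at hS
      have hs1 : sgnStep T j = 1 := sgnStep_add hSne hS
      have hstep2 : (toggleT j T) j = (toggleT j T) (j - 1) - indV Sᶜ := by
        funext x
        rw [toggleT_ge (show ¬ j < j by omega), toggleT_lt (show j - 1 < j by omega)]
        have hx := congrFun hS x
        simp only [Pi.add_apply] at hx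
        simp only [Pi.sub_apply, hs1]
        by_cases hxS : x ∈ S <;> simp [indV, hxS, Finset.mem_compl] at hx ⊢ <;> omega
      have hs2 : sgnStep (toggleT j T) j = -1 := sgnStep_sub hcne hstep2
      funext m
      by_cases hm : m < j
      · rw [toggleT_lt hm, toggleT_lt hm]
      · rw [toggleT_ge hm, toggleT_ge hm, hs2, hs1]
        funext x
        show T m x - 1 - (-1) = T m x
        ring
    · rw [if_neg e] at hS
      have hs1 : sgnStep T j = -1 := sgnStep_sub hSne hS
      have hstep2 : (toggleT j T) j = (toggleT j T) (j - 1) + indV Sᶜ := by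
        funext x
        rw [toggleT_ge (show ¬ j < j by omega), toggleT_lt (show j - 1 < j by omega)]
        have hx := congrFun hS x
        simp only [Pi.sub_apply] at hx
        simp only [Pi.add_apply, hs1]
        by_cases hxS : x ∈ S <;> simp [indV, hxS, Finset.mem_compl] at hx ⊢ <;> omega
      have hs2 : sgnStep (toggleT j T) j = 1 := sgnStep_add hcne hstep2
      funext m
      by_cases hm : m < j
      · rw [toggleT_lt hm, toggleT_lt hm]
      · rw [toggleT_ge hm, toggleT_ge hm, hs2, hs1]
        funext x
        show T m x - (-1) - 1 = T m x
        ring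
  constructor
  · -- (3) BK_i ∘ toggle_i = toggle_{i+1} ∘ BK_i
    rintro T c ⟨hA, hC⟩ i hi1 hi2 hc1 hc2
    have h1 : colStep r (c (i - 1)) (T (i - 1)) (T i) := by
      have := hC (i - 1) (by omega)
      rwa [show i - 1 + 1 = i by omega] at this
    have h2 := hC i (by omega)
    have M := BKcore (hA (i - 1) (by omega)) (hA i (by omega)) (hA (i + 1) (by omega)) h1 h2
    obtain ⟨S1, hS1c, hS1⟩ := h1
    obtain ⟨S1', hS1'c, hS1'⟩ := M.1
    have hS1ne : S1.Nonempty := Finset.card_pos.mp (by omega)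
    have hS1'ne : S1'.Nonempty := Finset.card_pos.mp (by omega)
    have hUi1 : BK i T (i + 1) = T (i + 1) := BK_apply_ne (by omega)
    have hUi : BK i T i = sortDesc (T (i + 1) + T (i - 1) - T i) := BK_apply_eq T i
    have hss : sgnStep (BK i T) (i + 1) = sgnStep T i := by
      by_cases e : 0 ≤ c (i - 1)
      · rw [if_pos e] at hS1 hS1'
        have hyp : BK i T (i + 1) = BK i T (i + 1 - 1) + indV S1' := by
          rw [show i + 1 - 1 = i by omega, hUi1, hUi]
          exact hS1'
        rw [sgnStep_add hS1'ne hyp, sgnStep_add hS1ne hS1]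
      · rw [if_neg e] at hS1 hS1'
        have hyp : BK i T (i + 1) = BK i T (i + 1 - 1) - indV S1' := by
          rw [show i + 1 - 1 = i by omega, hUi1, hUi]
          exact hS1'
        rw [sgnStep_sub hS1'ne hyp, sgnStep_sub hS1ne hS1]
    funext k
    by_cases hk : k = i
    · rw [hk, BK_apply_eq, toggleT_ge (show ¬ i + 1 < i by omega),
        toggleT_ge (show ¬ i < i by omega), toggleT_lt (show i - 1 < i by omega)]
      have harg : ((fun x => T (i + 1) x - sgnStep T i) + T (i - 1) -
          fun x => T i x - sgnStep T i) = T (i + 1) + T (i - 1) - T i := by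
        funext x
        simp only [Pi.add_apply, Pi.sub_apply]
        ring
      rw [harg, toggleT_lt (show i < i + 1 by omega), hUi]
    · by_cases hk2 : k < i
      · rw [BK_apply_ne hk, toggleT_lt hk2, toggleT_lt (show k < i + 1 by omega), BK_apply_ne hk]
      · rw [BK_apply_ne hk, toggleT_ge (show ¬ k < i by omega),
          toggleT_ge (show ¬ k < i + 1 by omega), hss]
        have l2 : BK i T k = T k := BK_apply_ne hk
        rw [l2]
  constructor
  · -- (4) distant BK's commute
    rintro T c ⟨hA, hC⟩ i j hi1 hi2 hj1 hj2 hij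
    funext k
    by_cases hki : k = i
    · rw [hki]
      have e1 : BK j T (i + 1) = T (i + 1) := BK_apply_ne (by omega)
      have e2 : BK j T (i - 1) = T (i - 1) := BK_apply_ne (by omega)
      have e3 : BK j T i = T i := BK_apply_ne (by omega)
      rw [BK_apply_eq, e1, e2, e3, BK_apply_ne (show ¬ i = j by omega), BK_apply_eq]
    · by_cases hkj : k = j
      · rw [hkj]
        have e1 : BK i T (j + 1) = T (j + 1) := BK_apply_ne (by omega)
        have e2 : BK i T (j - 1) = T (j - 1) := BK_apply_ne (by omega)
        have e3 : BK i T j = T j := BK_apply_ne (by omega)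
        rw [BK_apply_ne (show ¬ j = i by omega), BK_apply_eq, BK_apply_eq, e1, e2, e3]
      · rw [BK_apply_ne hki, BK_apply_ne hkj, BK_apply_ne hkj, BK_apply_ne hki]
  constructor
  · -- (5) BK_i and toggle_j commute when j ∉ {i, i+1}
    rintro T c ⟨hA, hC⟩ i j hi1 hi2 hj1 hjn hji hji1 hc1 hc2
    have hss : sgnStep (BK i T) j = sgnStep T j := by
      apply sgnStep_eq_of
      · exact BK_apply_ne hji
      · exact BK_apply_ne (by omega)
    funext k
    by_cases hk : k = i
    · rw [hk, BK_apply_eq]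
      by_cases hcase : j < i
      · rw [toggleT_ge (show ¬ i + 1 < j by omega), toggleT_ge (show ¬ i < j by omega),
          toggleT_ge (show ¬ i - 1 < j by omega)]
        have harg : ((fun x => T (i + 1) x - sgnStep T j) + (fun x => T (i - 1) x - sgnStep T j) -
            fun x => T i x - sgnStep T j) =
            fun x => (T (i + 1) + T (i - 1) - T i) x + (- sgnStep T j) := by
          funext x
          simp only [Pi.add_apply, Pi.sub_apply]
          ring
        rw [harg, sortDesc_shift, toggleT_ge (show ¬ i < j by omega), hss, BK_apply_eq]
        funext x
        show sortDesc (T (i + 1) + T (i - 1) - T i) x + - sgnStep T j =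
          sortDesc (T (i + 1) + T (i - 1) - T i) x - sgnStep T j
        ring
      · rw [toggleT_lt (show i + 1 < j by omega), toggleT_lt (show i < j by omega),
          toggleT_lt (show i - 1 < j by omega), toggleT_lt (show i < j by omega), BK_apply_eq]
    · rw [BK_apply_ne hk]
      by_cases hkj : k < j
      · rw [toggleT_lt hkj, toggleT_lt hkj, BK_apply_ne hk]
      · rw [toggleT_ge hkj, toggleT_ge hkj, hss]
        have l2 : BK i T k = T k := BK_apply_ne hk
        rw [l2]
  · -- (6) toggles commute
    rintro T c ⟨hA, hC⟩ i j hi1 hin hj1 hjn hij hci1 hci2 hcj1 hcj2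
    rcases Nat.lt_or_ge i j with h | h
    · exact toggle_comm_aux T h
    · exact (toggle_comm_aux T (show j < i by omega)).symm

end FT
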